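/- arXiv:2102.12298 — 2 statements merged into one kernel-verified Lean document; each statement's English description precedes it below -/
import Mathlib

section
/- The functions α, β: ℝ × ℝ³ → ℂ defined by α = (x²+y²+z²-t²-1+2iz)/(x²+y²+z²-(t-i)²) and β = (2(x-iy))/(x²+y²+z²-(t-i)²) satisfy Bateman's condition ∇α × ∇β = i(∂ₜα ∇β − ∂ₜβ ∇α), where ∇ denotes the gradient with respect to the spatial variables (x,y,z) and the cross product of complex vector fields is computed componentwise by the usual formula. -/
/-- Bateman's variable α. -/
noncomputable def batemanAlpha (t x y z : ℝ) : ℂ :=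
  ((x:ℂ)^2 + (y:ℂ)^2 + (z:ℂ)^2 - (t:ℂ)^2 - 1 + 2 * Complex.I * (z:ℂ)) /
    ((x:ℂ)^2 + (y:ℂ)^2 + (z:ℂ)^2 - ((t:ℂ) - Complex.I)^2)

/-- Bateman's variable β. -/
noncomputable def batemanBeta (t x y z : ℝ) : ℂ :=
  (2 * ((x:ℂ) - Complex.I * (y:ℂ))) /
    ((x:ℂ)^2 + (y:ℂ)^2 + (z:ℂ)^2 - ((t:ℂ) - Complex.I)^2)

/-- Componentwise cross product of vectors in ℂ³. -/
def ccross (a b : ℂ × ℂ × ℂ) : ℂ × ℂ × ℂ :=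
  (a.2.1 * b.2.2 - a.2.2 * b.2.1,
   a.2.2 * b.1 - a.1 * b.2.2,
   a.1 * b.2.1 - a.2.1 * b.1)

/-- Spatial gradient of a complex-valued function of (t,x,y,z). -/
noncomputable def spatialGrad (f : ℝ → ℝ → ℝ → ℝ → ℂ) (t x y z : ℝ) : ℂ × ℂ × ℂ :=
  (deriv (fun s => f t s y z) x,
   deriv (fun s => f t x s z) y,
   deriv (fun s => f t x y s) z)

/-- Time derivative of a complex-valued function of (t,x,y,z). -/
noncomputable def timeDeriv (f : ℝ → ℝ → ℝ → ℝ → ℂ) (t x y z : ℝ) : ℂ :=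
  deriv (fun s => f s x y z) t

private lemma hR (x : ℝ) : HasDerivAt (fun s : ℝ => (s:ℂ)) 1 x := by
  simpa using (hasDerivAt_id x).ofReal_comp

private lemma hSq (x : ℝ) : HasDerivAt (fun s : ℝ => (s:ℂ)^2) (2*(x:ℂ)) x := by
  have := (hR x).mul (hR x)
  simp only [← pow_two] at this
  exact this.congr_deriv (by ring)

private lemma hSqI (t : ℝ) :
    HasDerivAt (fun s : ℝ => ((s:ℂ) - Complex.I)^2) (2*((t:ℂ) - Complex.I)) t := by
  have := ((hR t).sub_const Complex.I).mul ((hR t).sub_const Complex.I)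
  simp only [← pow_two] at this
  exact this.congr_deriv (by ring)

set_option maxHeartbeats 2000000 in
/-- Bateman's condition ∇α × ∇β = i(∂ₜα ∇β − ∂ₜβ ∇α) holds for the
    variables α, β at every point where the denominator is nonzero. -/
theorem bateman_condition (t x y z : ℝ)
    (h : (x:ℂ)^2 + (y:ℂ)^2 + (z:ℂ)^2 - ((t:ℂ) - Complex.I)^2 ≠ 0) :
    ccross (spatialGrad batemanAlpha t x y z) (spatialGrad batemanBeta t x y z)
      = Complex.I •
          (timeDeriv batemanAlpha t x y z • spatialGrad batemanBeta t x y z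
            - timeDeriv batemanBeta t x y z • spatialGrad batemanAlpha t x y z) := by
  have hDx : HasDerivAt (fun s : ℝ => (s:ℂ)^2 + (y:ℂ)^2 + (z:ℂ)^2 - ((t:ℂ)-Complex.I)^2)
      (2*(x:ℂ)) x :=
    (((hSq x).add_const ((y:ℂ)^2)).add_const ((z:ℂ)^2)).sub_const (((t:ℂ)-Complex.I)^2)
  have hDy : HasDerivAt (fun s : ℝ => (x:ℂ)^2 + (s:ℂ)^2 + (z:ℂ)^2 - ((t:ℂ)-Complex.I)^2)
      (2*(y:ℂ)) y :=
    ((((hSq y).const_add ((x:ℂ)^2)).add_const ((z:ℂ)^2)).sub_const (((t:ℂ)-Complex.I)^2))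
  have hDz : HasDerivAt (fun s : ℝ => (x:ℂ)^2 + (y:ℂ)^2 + (s:ℂ)^2 - ((t:ℂ)-Complex.I)^2)
      (2*(z:ℂ)) z :=
    (((hSq z).const_add ((x:ℂ)^2 + (y:ℂ)^2)).sub_const (((t:ℂ)-Complex.I)^2))
  have hDt : HasDerivAt (fun s : ℝ => (x:ℂ)^2 + (y:ℂ)^2 + (z:ℂ)^2 - ((s:ℂ)-Complex.I)^2)
      (-(2*((t:ℂ)-Complex.I))) t :=
    (hSqI t).const_sub ((x:ℂ)^2 + (y:ℂ)^2 + (z:ℂ)^2)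
  -- numerators of α
  have hNx : HasDerivAt (fun s : ℝ =>
      (s:ℂ)^2 + (y:ℂ)^2 + (z:ℂ)^2 - (t:ℂ)^2 - 1 + 2 * Complex.I * (z:ℂ)) (2*(x:ℂ)) x :=
    (((((hSq x).add_const ((y:ℂ)^2)).add_const ((z:ℂ)^2)).sub_const ((t:ℂ)^2)).sub_const
      1).add_const (2*Complex.I*(z:ℂ))
  have hNy : HasDerivAt (fun s : ℝ =>
      (x:ℂ)^2 + (s:ℂ)^2 + (z:ℂ)^2 - (t:ℂ)^2 - 1 + 2 * Complex.I * (z:ℂ)) (2*(y:ℂ)) y :=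
    (((((hSq y).const_add ((x:ℂ)^2)).add_const ((z:ℂ)^2)).sub_const ((t:ℂ)^2)).sub_const
      1).add_const (2*Complex.I*(z:ℂ))
  have hNz : HasDerivAt (fun s : ℝ =>
      (x:ℂ)^2 + (y:ℂ)^2 + (s:ℂ)^2 - (t:ℂ)^2 - 1 + 2 * Complex.I * (s:ℂ))
      (2*(z:ℂ) + 2*Complex.I) z := by
    have := ((((hSq z).const_add ((x:ℂ)^2 + (y:ℂ)^2)).sub_const ((t:ℂ)^2)).sub_const 1).add
      ((hR z).const_mul (2*Complex.I))
    exact this.congr_deriv (by ring)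
  have hNt : HasDerivAt (fun s : ℝ =>
      (x:ℂ)^2 + (y:ℂ)^2 + (z:ℂ)^2 - (s:ℂ)^2 - 1 + 2 * Complex.I * (z:ℂ))
      (-(2*(t:ℂ))) t := by
    have := ((((hSq t).const_sub ((x:ℂ)^2 + (y:ℂ)^2 + (z:ℂ)^2)).sub_const 1).add_const
      (2*Complex.I*(z:ℂ)))
    convert this using 1
  -- numerators of β
  have hMx : HasDerivAt (fun s : ℝ => 2 * ((s:ℂ) - Complex.I * (y:ℂ))) (2:ℂ) x := by
    have := ((hR x).sub_const (Complex.I * (y:ℂ))).const_mul (2:ℂ)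
    exact this.congr_deriv (by ring)
  have hMy : HasDerivAt (fun s : ℝ => 2 * ((x:ℂ) - Complex.I * (s:ℂ)))
      (-(2*Complex.I)) y := by
    have := (((hR y).const_mul Complex.I).const_sub ((x:ℂ))).const_mul (2:ℂ)
    exact this.congr_deriv (by ring)
  have hMz : HasDerivAt (fun s : ℝ => 2 * ((x:ℂ) - Complex.I * (y:ℂ))) (0:ℂ) z :=
    hasDerivAt_const _ _
  have hMt : HasDerivAt (fun s : ℝ => 2 * ((x:ℂ) - Complex.I * (y:ℂ))) (0:ℂ) t :=
    hasDerivAt_const _ _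
  -- the eight derivative values
  have hax : deriv (fun s => batemanAlpha t s y z) x
      = ((2*(x:ℂ)) * ((x:ℂ)^2 + (y:ℂ)^2 + (z:ℂ)^2 - ((t:ℂ)-Complex.I)^2)
          - ((x:ℂ)^2 + (y:ℂ)^2 + (z:ℂ)^2 - (t:ℂ)^2 - 1 + 2*Complex.I*(z:ℂ)) * (2*(x:ℂ)))
        / ((x:ℂ)^2 + (y:ℂ)^2 + (z:ℂ)^2 - ((t:ℂ)-Complex.I)^2)^2 :=
    (hNx.div hDx h).deriv
  have hay : deriv (fun s => batemanAlpha t x s z) y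
      = ((2*(y:ℂ)) * ((x:ℂ)^2 + (y:ℂ)^2 + (z:ℂ)^2 - ((t:ℂ)-Complex.I)^2)
          - ((x:ℂ)^2 + (y:ℂ)^2 + (z:ℂ)^2 - (t:ℂ)^2 - 1 + 2*Complex.I*(z:ℂ)) * (2*(y:ℂ)))
        / ((x:ℂ)^2 + (y:ℂ)^2 + (z:ℂ)^2 - ((t:ℂ)-Complex.I)^2)^2 :=
    (hNy.div hDy h).deriv
  have haz : deriv (fun s => batemanAlpha t x y s) z
      = ((2*(z:ℂ) + 2*Complex.I) * ((x:ℂ)^2 + (y:ℂ)^2 + (z:ℂ)^2 - ((t:ℂ)-Complex.I)^2)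
          - ((x:ℂ)^2 + (y:ℂ)^2 + (z:ℂ)^2 - (t:ℂ)^2 - 1 + 2*Complex.I*(z:ℂ)) * (2*(z:ℂ)))
        / ((x:ℂ)^2 + (y:ℂ)^2 + (z:ℂ)^2 - ((t:ℂ)-Complex.I)^2)^2 :=
    (hNz.div hDz h).deriv
  have hat : deriv (fun s => batemanAlpha s x y z) t
      = ((-(2*(t:ℂ))) * ((x:ℂ)^2 + (y:ℂ)^2 + (z:ℂ)^2 - ((t:ℂ)-Complex.I)^2)
          - ((x:ℂ)^2 + (y:ℂ)^2 + (z:ℂ)^2 - (t:ℂ)^2 - 1 + 2*Complex.I*(z:ℂ))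
              * (-(2*((t:ℂ)-Complex.I))))
        / ((x:ℂ)^2 + (y:ℂ)^2 + (z:ℂ)^2 - ((t:ℂ)-Complex.I)^2)^2 :=
    (hNt.div hDt h).deriv
  have hbx : deriv (fun s => batemanBeta t s y z) x
      = ((2:ℂ) * ((x:ℂ)^2 + (y:ℂ)^2 + (z:ℂ)^2 - ((t:ℂ)-Complex.I)^2)
          - (2 * ((x:ℂ) - Complex.I*(y:ℂ))) * (2*(x:ℂ)))
        / ((x:ℂ)^2 + (y:ℂ)^2 + (z:ℂ)^2 - ((t:ℂ)-Complex.I)^2)^2 :=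
    (hMx.div hDx h).deriv
  have hby : deriv (fun s => batemanBeta t x s z) y
      = ((-(2*Complex.I)) * ((x:ℂ)^2 + (y:ℂ)^2 + (z:ℂ)^2 - ((t:ℂ)-Complex.I)^2)
          - (2 * ((x:ℂ) - Complex.I*(y:ℂ))) * (2*(y:ℂ)))
        / ((x:ℂ)^2 + (y:ℂ)^2 + (z:ℂ)^2 - ((t:ℂ)-Complex.I)^2)^2 :=
    (hMy.div hDy h).deriv
  have hbz : deriv (fun s => batemanBeta t x y s) z
      = ((0:ℂ) * ((x:ℂ)^2 + (y:ℂ)^2 + (z:ℂ)^2 - ((t:ℂ)-Complex.I)^2)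
          - (2 * ((x:ℂ) - Complex.I*(y:ℂ))) * (2*(z:ℂ)))
        / ((x:ℂ)^2 + (y:ℂ)^2 + (z:ℂ)^2 - ((t:ℂ)-Complex.I)^2)^2 :=
    (hMz.div hDz h).deriv
  have hbt : deriv (fun s => batemanBeta s x y z) t
      = ((0:ℂ) * ((x:ℂ)^2 + (y:ℂ)^2 + (z:ℂ)^2 - ((t:ℂ)-Complex.I)^2)
          - (2 * ((x:ℂ) - Complex.I*(y:ℂ))) * (-(2*((t:ℂ)-Complex.I))))
        / ((x:ℂ)^2 + (y:ℂ)^2 + (z:ℂ)^2 - ((t:ℂ)-Complex.I)^2)^2 :=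
    (hMt.div hDt h).deriv
  simp only [ccross, spatialGrad, timeDeriv, hax, hay, haz, hat, hbx, hby, hbz, hbt,
    Prod.smul_mk, Prod.mk_sub_mk, smul_eq_mul, Prod.mk.injEq]
  obtain ⟨i, hi, hgoal⟩ : ∃ i : ℂ, i ^ 2 = -1 ∧ i = Complex.I :=
    ⟨Complex.I, Complex.I_sq, rfl⟩
  rw [← hgoal]
  have h2 : i^2 = -1 := hi
  have h3 : i^3 = -i := by rw [pow_succ, h2]; ring
  have h4 : i^4 = 1 := by rw [show (4:ℕ)=2*2 from rfl, pow_mul, h2]; ring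
  have h5 : i^5 = i := by rw [pow_succ, h4]; ring
  have h6 : i^6 = -1 := by rw [show (6:ℕ)=2*3 from rfl, pow_mul, h2]; ring
  have h7 : i^7 = -i := by rw [show (7:ℕ)=6+1 from rfl, pow_succ, h6]; ring
  have h8 : i^8 = 1 := by rw [show (8:ℕ)=2*4 from rfl, pow_mul, h2]; ring
  refine ⟨?_, ?_, ?_⟩ <;>
  · rw [div_mul_div_comm, div_mul_div_comm, div_mul_div_comm, div_mul_div_comm,
      ← sub_div, ← sub_div, ← mul_div_assoc]
    congr 1
    ring_nf
    simp only [h2, h3, h4, h5, h6, h7, h8]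
    ring
end

section
/- For positive integers p, q, let r > 0 be the critical radius, i.e. the smallest r such that the sphere {|z₁|² + |z₂|² = r²} in ℂ² meets the curve {z₁^p z₂^q = 1}, so that at the intersection points |z₁| and |z₂| take the values minimizing |z₁|² + |z₂|² subject to |z₁|^p |z₂|^q = 1. Then at every intersection point of {z₁^p z₂^q = 1} with this sphere, the complex tangent line of the curve lies in the maximal complex subspace of the tangent space of the sphere, i.e., the intersection is totally tangential. -/
/-- Totally tangential intersection of the curve {z₁^p z₂^q = 1} with the
    sphere of critical radius: at every point z of the curve where
    |z₁|² + |z₂|² is critical along the curve (i.e., q|z₁|² = p|z₂|²), every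
    vector w in the complex tangent line of the curve (the kernel of the
    differential of z₁^p z₂^q) lies in the real tangent space of the sphere
    through z, i.e., Re(z̄₁w₁ + z̄₂w₂) = 0. -/
theorem torus_curve_totally_tangential (p q : ℕ) (hp : 0 < p) (hq : 0 < q)
    (z : ℂ × ℂ) (hz : z.1 ^ p * z.2 ^ q = 1)
    (hcrit : (q : ℝ) * ‖z.1‖ ^ 2 = (p : ℝ) * ‖z.2‖ ^ 2) :
    ∀ w : ℂ × ℂ,
      (p : ℂ) * z.1 ^ (p - 1) * z.2 ^ q * w.1
        + (q : ℂ) * z.1 ^ p * z.2 ^ (q - 1) * w.2 = 0 →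
      Complex.re (starRingEnd ℂ z.1 * w.1 + starRingEnd ℂ z.2 * w.2) = 0 := by
  intro w hw
  have hz1 : z.1 ≠ 0 := by
    intro h
    rw [h, zero_pow hp.ne', zero_mul] at hz
    exact one_ne_zero hz.symm
  have hz2 : z.2 ≠ 0 := by
    intro h
    rw [h, zero_pow hq.ne', mul_zero] at hz
    exact one_ne_zero hz.symm
  have h1 : z.1 ^ (p - 1) * z.1 = z.1 ^ p := by
    rw [← pow_succ, Nat.sub_add_cancel hp]
  have h2 : z.2 ^ (q - 1) * z.2 = z.2 ^ q := by
    rw [← pow_succ, Nat.sub_add_cancel hq]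
  have key : (p : ℂ) * z.2 * w.1 + (q : ℂ) * z.1 * w.2 = 0 := by
    have hk : (z.1 ^ p * z.2 ^ q) * ((p : ℂ) * z.2 * w.1 + (q : ℂ) * z.1 * w.2)
        = ((p : ℂ) * z.1 ^ (p - 1) * z.2 ^ q * w.1
            + (q : ℂ) * z.1 ^ p * z.2 ^ (q - 1) * w.2) * (z.1 * z.2) := by
      rw [← h1, ← h2]; ring
    rw [hz, one_mul, hw, zero_mul] at hk
    exact hk
  have hc : (q : ℂ) * Complex.normSq z.1 = (p : ℂ) * Complex.normSq z.2 := by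
    rw [Complex.sq_norm, Complex.sq_norm] at hcrit
    exact_mod_cast congrArg (Complex.ofReal) hcrit
  have h3 : (p : ℂ) * z.2 * (starRingEnd ℂ z.1 * w.1 + starRingEnd ℂ z.2 * w.2) = 0 := by
    linear_combination (starRingEnd ℂ z.1) * key + (p : ℂ) * w.2 * (Complex.mul_conj z.2)
      - (q : ℂ) * w.2 * (Complex.mul_conj z.1) - w.2 * hc
  have hp0 : (p : ℂ) * z.2 ≠ 0 := by
    exact mul_ne_zero (Nat.cast_ne_zero.mpr hp.ne') hz2
  have h4 : starRingEnd ℂ z.1 * w.1 + starRingEnd ℂ z.2 * w.2 = 0 :=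
    (mul_eq_zero.mp h3).resolve_left hp0
  rw [h4]
  simp
end
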